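/- arXiv:1906.09006 — 3 statements merged into one kernel-verified Lean document; each statement's English description precedes it below -/
import Mathlib

section
/- Let n ≥ 1 and let φ : [n]^n → [n] be a function from the n-fold product of the n-element set [n] = {1,…,n} to itself that commutes with every function f : [n] → [n] (i.e., φ(f a₁,…,f aₙ) = f(φ(a₁,…,aₙ))). Then φ is a coordinate projection: there exists i ∈ [n] with φ(a₁,…,aₙ) = aᵢ for all tuples. -/
/-- Any self-map of `[n]^n` commuting with all endomorphisms of `[n]` is a coordinate
projection. -/
theorem stmt2 (n : ℕ) (hn : 1 ≤ n) (φ : (Fin n → Fin n) → Fin n)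
    (hφ : ∀ (f : Fin n → Fin n) (a : Fin n → Fin n), φ (fun j => f (a j)) = f (φ a)) :
    ∃ i : Fin n, ∀ a : Fin n → Fin n, φ a = a i := by
  exact ⟨φ id, fun a => hφ a id⟩
end

section
/- Let R be a commutative ring, n ≥ 2, and let φ : (R^n)^{⊗n} → R^n be an R-linear map that commutes with every R-linear endomorphism g of R^n in the sense that φ ∘ g^{⊗n} = g ∘ φ. Then φ = 0. -/
open scoped TensorProduct

/-- For `n ≥ 2`, an `R`-linear map `(R^n)^{⊗n} → R^n` commuting with the induced action of
every linear endomorphism of `R^n` is zero. -/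
theorem stmt4 (R : Type) [CommRing R] (n : ℕ) (hn : 2 ≤ n)
    (φ : (⨂[R] _ : Fin n, (Fin n → R)) →ₗ[R] (Fin n → R))
    (hφ : ∀ g : (Fin n → R) →ₗ[R] (Fin n → R),
      φ ∘ₗ PiTensorProduct.map (fun _ : Fin n => g) = g ∘ₗ φ) :
    φ = 0 := by
  classical
  set e : Fin n → (Fin n → R) := fun i => Pi.single i 1 with he
  -- the elementary tensor attached to f : Fin n → Fin n
  set T : (Fin n → Fin n) → (⨂[R] _ : Fin n, (Fin n → R)) :=
    fun f => PiTensorProduct.tprod R (fun j => e (f j)) with hT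
  -- Lemma 1
  have L1 : ∀ (f : Fin n → Fin n) (i : Fin n), i ∈ Set.range f →
      ∀ j : Fin n, j ≠ i → φ (T f) j = 0 := by
    intro f i hi j hj
    obtain ⟨j₀, hj₀⟩ := hi
    set π : (Fin n → R) →ₗ[R] (Fin n → R) :=
      LinearMap.pi (fun k => if k = i then 0 else LinearMap.proj k) with hπ
    have hπe : ∀ k, k ≠ i → π (e k) = e k := by
      intro k hk
      funext m
      simp only [hπ, LinearMap.pi_apply, he]
      by_cases hm : m = i
      · subst hm
        simp [Pi.single_eq_of_ne (Ne.symm hk)]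
      · simp [hm]
    have hπi : π (e i) = 0 := by
      funext m
      simp only [hπ, LinearMap.pi_apply, he]
      by_cases hm : m = i
      · simp [hm]
      · simp [hm, Pi.single_eq_of_ne (Ne.symm hm)]
    have h := congrFun (congrArg (DFunLike.coe) (hφ π)) (T f)
    simp only [LinearMap.comp_apply, hT, PiTensorProduct.map_tprod] at h
    have hz : (PiTensorProduct.tprod R fun j => π (e (f j))) = 0 := by
      apply MultilinearMap.map_coord_zero (PiTensorProduct.tprod R) j₀
      rw [hj₀, hπi]
    rw [hz, map_zero] at h
    have := congrFun h j
    simp only [hπ, LinearMap.pi_apply] at this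
    rw [if_neg hj] at this
    exact this.symm
  -- Lemma 2 : two points in range ⇒ φ (T f) = 0
  have L2 : ∀ (f : Fin n → Fin n), (∃ i₁ i₂, i₁ ≠ i₂ ∧ i₁ ∈ Set.range f ∧ i₂ ∈ Set.range f) →
      φ (T f) = 0 := by
    rintro f ⟨i₁, i₂, h12, h1, h2⟩
    funext j
    by_cases hj : j = i₁
    · exact hj ▸ L1 f i₂ h2 _ (hj ▸ h12)
    · exact L1 f i₁ h1 j hj
  -- Lemma 3 : constant f
  have L3 : ∀ i : Fin n, φ (T (fun _ => i)) = 0 := by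
    intro i
    set z : Fin n := ⟨0, by omega⟩ with hz'
    set o : Fin n := ⟨1, by omega⟩ with ho'
    have h01 : z ≠ o := by simp [hz', ho', Fin.ext_iff]
    set f : Fin n → Fin n := fun j => if j = z then o else z with hf
    have hTf : φ (T f) = 0 := by
      apply L2
      refine ⟨z, o, h01, ⟨o, ?_⟩, ⟨z, ?_⟩⟩
      · simp [hf, h01.symm]
      · simp [hf]
    set sumL : (Fin n → R) →ₗ[R] R := ∑ k, LinearMap.proj k with hs
    set g : (Fin n → R) →ₗ[R] (Fin n → R) := LinearMap.smulRight sumL (e i) with hg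
    have hge : ∀ k, g (e k) = e i := by
      intro k
      simp only [hg, LinearMap.smulRight_apply, hs, LinearMap.sum_apply, LinearMap.proj_apply, he]
      rw [Finset.sum_eq_single k]
      · simp
      · intro b _ hb; exact Pi.single_eq_of_ne hb 1
      · simp
    have h := congrFun (congrArg (DFunLike.coe) (hφ g)) (T f)
    simp only [LinearMap.comp_apply, hT, PiTensorProduct.map_tprod] at h
    have hrw : (PiTensorProduct.tprod R fun j => g (e (f j))) = T (fun _ => i) := by
      simp only [hT]
      congr 1
      funext j
      exact hge (f j)
    rw [hrw, hTf, map_zero] at h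
    exact h
  -- all elementary basis tensors vanish
  have key : ∀ f : Fin n → Fin n, φ (T f) = 0 := by
    intro f
    by_cases hc : ∃ i₁ i₂, i₁ ≠ i₂ ∧ i₁ ∈ Set.range f ∧ i₂ ∈ Set.range f
    · exact L2 f hc
    · push_neg at hc
      set z : Fin n := ⟨0, by omega⟩ with hz'
      have hconst : ∀ j, f j = f z := by
        intro j
        by_contra hne
        exact hc (f j) (f z) hne ⟨j, rfl⟩ ⟨z, rfl⟩
      have : f = fun _ => f z := funext hconst
      rw [this]
      exact L3 (f z)
  -- conclude
  apply PiTensorProduct.ext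
  apply MultilinearMap.ext
  intro v
  simp only [LinearMap.compMultilinearMap_apply, LinearMap.zero_comp,
    MultilinearMap.zero_apply]
  have hv : ∀ j, v j = ∑ k, v j k • e k := by
    intro j; funext m
    simp [he, Finset.sum_apply, Pi.single_apply]
  calc φ (PiTensorProduct.tprod R v) = φ (PiTensorProduct.tprod R fun j => ∑ k, v j k • e k) := by
        congr 1; exact congrArg (PiTensorProduct.tprod R) (funext hv)
    _ = 0 := by
        rw [MultilinearMap.map_sum]
        rw [map_sum]
        apply Finset.sum_eq_zero
        intro f _
        rw [MultilinearMap.map_smul_univ, map_smul]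
        have := key f
        simp only [hT] at this
        rw [this, smul_zero]
end

section
/- Let K be an infinite field and V a finite-dimensional K-vector space with dim V = n. Then every GL(V)-equivariant linear map V^{⊗n} → V^{⊗n} (equivariant for the diagonal action) lies in the image of the group algebra K[Sₙ] acting by permuting tensor factors; i.e., End_{GL(V)}(V^{⊗n}) = K[Sₙ] acting by place permutations, and this map K[Sₙ] → End_{GL(V)}(V^{⊗n}) is bijective when dim V = n. -/
open scoped TensorProduct

/-- The action of a permutation `σ ∈ Sₙ` on the `n`-th tensor power `V^{⊗n}`,
permuting the tensor factors. -/
noncomputable def permFactors (K : Type) [Field K] (V : Type) [AddCommGroup V] [Module K V]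
    (n : ℕ) (σ : Equiv.Perm (Fin n)) :
    (⨂[K] _ : Fin n, V) →ₗ[K] (⨂[K] _ : Fin n, V) :=
  (PiTensorProduct.reindex K (fun _ : Fin n => V) σ).toLinearMap

/-- The diagonal action of a linear map `g : V → V` on the tensor power `V^{⊗n}`. -/
noncomputable def diagPower (K : Type) [Field K] (V : Type) [AddCommGroup V] [Module K V]
    (n : ℕ) (g : V →ₗ[K] V) :
    (⨂[K] _ : Fin n, V) →ₗ[K] (⨂[K] _ : Fin n, V) :=
  PiTensorProduct.map (fun _ : Fin n => g)

/-!
Fix a basis `b` of `V` and put `e := b₁ ⊗ ⋯ ⊗ bₙ`. A permutation `σ` sends `e` to the basis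
tensor `b_{σ⁻¹ 1} ⊗ ⋯ ⊗ b_{σ⁻¹ n}`, so the place permutations are linearly independent.

Conversely, let `T` commute with `GL(V)`. Since `T` commutes with the diagonal torus, `T e` has
the same weight `(1, …, 1)` as `e`, so it is a combination of the tensors `σ e`; detecting the
weight needs a scalar `s ∉ {0, 1}`, which is where `K` infinite is used. Subtracting the
corresponding element of `K[Sₙ]` leaves an equivariant `S` with `S e = 0`, hence
`S (v₁ ⊗ ⋯ ⊗ vₙ) = 0` whenever `(vᵢ)` is a basis, i.e. wherever the multilinear form `det_b`
does not vanish. Over an infinite field a multilinear map vanishing off the zero set of a nonzero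
multilinear form vanishes everywhere (the product of the two polynomial functions is zero), so
`S = 0`.
-/

open MvPolynomial PiTensorProduct

namespace MultilinearMap

variable {K V W ι κ : Type*} [Field K] [AddCommGroup V] [Module K V] [AddCommGroup W]
  [Module K W] [Fintype ι] [DecidableEq ι] [Fintype κ]

noncomputable def toMvPolynomial (b : Module.Basis κ K V)
    (D : MultilinearMap K (fun _ : ι => V) K) : MvPolynomial (κ × ι) K :=
  ∑ f : ι → κ, C (D fun i => b (f i)) * ∏ i, X (f i, i)

theorem eval_toMvPolynomial (b : Module.Basis κ K V) (D : MultilinearMap K (fun _ : ι => V) K)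
    (v : ι → V) : eval (fun p => b.repr (v p.2) p.1) (D.toMvPolynomial b) = D v := by
  conv_rhs => rw [← funext fun i => b.sum_repr (v i), D.map_sum]
  simp [toMvPolynomial, D.map_smul_univ, mul_comm]

theorem eq_zero_of_forall_apply_eq_zero_of_apply_ne_zero [Infinite K] [FiniteDimensional K V]
    {D : MultilinearMap K (fun _ : ι => V) K} (hD : D ≠ 0)
    {M : MultilinearMap K (fun _ : ι => V) W} (h : ∀ v, D v ≠ 0 → M v = 0) : M = 0 := by
  let b := Module.finBasis K V
  have coords_surjective : ∀ x : Fin (Module.finrank K V) × ι → K,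
      ∃ v : ι → V, (fun p => b.repr (v p.2) p.1) = x :=
    fun x => ⟨fun i => b.equivFun.symm fun j => x (j, i), by
      ext p; rw [← b.equivFun_apply, b.equivFun.apply_symm_apply]⟩
  ext v
  refine (Module.forall_dual_apply_eq_zero_iff K _).mp fun ℓ => ?_
  set P := (ℓ.compMultilinearMap M).toMvPolynomial b
  have hDP : D.toMvPolynomial b * P = 0 := MvPolynomial.funext fun x => by
    obtain ⟨v, rfl⟩ := coords_surjective x
    by_cases hv : D v = 0
    · simp [eval_toMvPolynomial, hv]
    · simp [P, eval_toMvPolynomial, h v hv]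
  have hD' : D.toMvPolynomial b ≠ 0 := by
    obtain ⟨v, hv⟩ : ∃ v, D v ≠ 0 := by
      by_contra! h
      exact hD (MultilinearMap.ext h)
    intro h0
    simp [← eval_toMvPolynomial b D v, h0] at hv
  simpa [P, eval_toMvPolynomial] using congrArg (eval fun p => b.repr (v p.2) p.1)
    ((mul_eq_zero.mp hDP).resolve_left hD')

end MultilinearMap

section TensorPower

variable {K : Type} [Field K] {V : Type} [AddCommGroup V] [Module K V] {n : ℕ}

@[simp]
theorem diagPower_tprod (g : V →ₗ[K] V) (v : Fin n → V) :
    diagPower K V n g (tprod K v) = tprod K fun i => g (v i) :=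
  map_tprod _ _

@[simp]
theorem permFactors_tprod (σ : Equiv.Perm (Fin n)) (v : Fin n → V) :
    permFactors K V n σ (tprod K v) = tprod K fun i => v (σ.symm i) :=
  reindex_tprod _ _

theorem permFactors_comp_diagPower (σ : Equiv.Perm (Fin n)) (g : V →ₗ[K] V) :
    permFactors K V n σ ∘ₗ diagPower K V n g =
      diagPower K V n g ∘ₗ permFactors K V n σ := by
  ext v
  simp

theorem linearIndependent_permFactors {κ : Type*} (b : Module.Basis κ K V) (e : Fin n ↪ κ) :
    LinearIndependent K (permFactors K V n) := by
  let bt := Basis.piTensorProduct fun _ : Fin n => b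
  have happly : (fun σ => permFactors K V n σ (tprod K fun i => b (e i))) =
      bt ∘ fun σ => e ∘ σ.symm := by
    ext σ
    simp [bt]
  refine LinearIndependent.of_comp (LinearMap.applyₗ (tprod K fun i => b (e i))) ?_
  refine (happly ▸ bt.linearIndependent.comp _ fun σ τ h => ?_ :)
  exact Equiv.symm_bijective.injective (DFunLike.coe_injective (e.injective.comp_left h))

theorem diagPower_unitsSMul_tprod {κ : Type*} (b : Module.Basis κ K V) (w : κ → Kˣ)
    (f : Fin n → κ) :
    diagPower K V n (b.equiv (b.unitsSMul w) (Equiv.refl κ)) (tprod K fun i => b (f i)) =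
      (∏ i, (w (f i) : K)) • tprod K fun i => b (f i) := by
  simp [Module.Basis.unitsSMul_apply, Units.smul_def, MultilinearMap.map_smul_univ]

theorem repr_diagPower_unitsSMul {κ : Type*} (b : Module.Basis κ K V) (w : κ → Kˣ)
    (y : ⨂[K] _ : Fin n, V) (f : Fin n → κ) :
    (Basis.piTensorProduct fun _ => b).repr
        (diagPower K V n (b.equiv (b.unitsSMul w) (Equiv.refl κ)) y) f =
      (∏ i, (w (f i) : K)) * (Basis.piTensorProduct fun _ => b).repr y f := by
  classical
  set bt := Basis.piTensorProduct fun _ : Fin n => b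
  have hcoord : bt.coord f ∘ₗ diagPower K V n (b.equiv (b.unitsSMul w) (Equiv.refl κ)) =
      (∏ i, (w (f i) : K)) • bt.coord f := bt.ext fun g => by
    have hg : diagPower K V n (b.equiv (b.unitsSMul w) (Equiv.refl κ)) (bt g) =
        (∏ i, (w (g i) : K)) • bt g := by
      simpa [bt] using diagPower_unitsSMul_tprod b w g
    rw [LinearMap.comp_apply, hg, map_smul, LinearMap.smul_apply, Module.Basis.coord_apply,
      bt.repr_self, smul_eq_mul, smul_eq_mul, Finsupp.single_apply]
    split_ifs with h
    · rw [h]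
    · simp
  exact LinearMap.congr_fun hcoord y

/-- `End_{GL(V)}(V^{⊗n})`. -/
def equivariantEnd (K : Type) [Field K] (V : Type) [AddCommGroup V] [Module K V] (n : ℕ) :
    Subalgebra K (Module.End K (⨂[K] _ : Fin n, V)) :=
  Subalgebra.centralizer K (Set.range fun g : V ≃ₗ[K] V => diagPower K V n g.toLinearMap)

theorem mem_equivariantEnd_iff {T : Module.End K (⨂[K] _ : Fin n, V)} :
    T ∈ equivariantEnd K V n ↔
      ∀ g : V ≃ₗ[K] V,
        T ∘ₗ diagPower K V n g.toLinearMap = diagPower K V n g.toLinearMap ∘ₗ T := by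
  simp only [equivariantEnd, Subalgebra.mem_centralizer_iff, Set.forall_mem_range]
  exact forall_congr' fun _ => eq_comm

theorem span_permFactors_le_equivariantEnd :
    Submodule.span K (Set.range (permFactors K V n)) ≤
      Subalgebra.toSubmodule (equivariantEnd K V n) :=
  Submodule.span_le.mpr <| Set.range_subset_iff.mpr fun σ =>
    mem_equivariantEnd_iff.mpr fun g => permFactors_comp_diagPower σ g.toLinearMap

variable [Infinite K]

theorem surjective_of_mem_support_repr_apply_tprod (b : Module.Basis (Fin n) K V)
    {T : Module.End K (⨂[K] _ : Fin n, V)} (hT : T ∈ equivariantEnd K V n) {f : Fin n → Fin n}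
    (hf : f ∈ ((Basis.piTensorProduct fun _ => b).repr (T (tprod K b))).support) :
    Function.Surjective f := by
  classical
  by_contra hsurj
  obtain ⟨j, hj⟩ := not_forall.mp hsurj
  obtain ⟨s, hs⟩ := Infinite.exists_notMem_finset ({0, 1} : Finset K)
  simp only [Finset.mem_insert, Finset.mem_singleton, not_or] at hs
  -- the torus element scaling `b j` by `s`
  set w : Fin n → Kˣ := Pi.mulSingle j (Units.mk0 s hs.1)
  have hx : diagPower K V n (b.equiv (b.unitsSMul w) (Equiv.refl _)) (tprod K b) =
      s • tprod K b := by
    have hw : ∏ i, (w i : K) = s := by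
      rw [← Units.coe_prod, Finset.prod_pi_mulSingle']
      simp
    rw [← hw]
    exact diagPower_unitsSMul_tprod b w id
  have hwf : ∏ i, (w (f i) : K) = 1 :=
    Finset.prod_eq_one fun i _ => by simp [w, Pi.mulSingle_eq_of_ne fun h => hj ⟨i, h⟩]
  have key := congrArg (fun y => (Basis.piTensorProduct fun _ => b).repr y f)
    (LinearMap.congr_fun (mem_equivariantEnd_iff.mp hT (b.equiv (b.unitsSMul w) (Equiv.refl _)))
      (tprod K b))
  simp only [LinearMap.comp_apply, hx, map_smul, repr_diagPower_unitsSMul, hwf] at key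
  exact hs.2 (mul_right_cancel₀ ((Finsupp.mem_support_iff).mp hf) (by simpa using key))

theorem apply_tprod_mem_span_permFactors_apply (b : Module.Basis (Fin n) K V)
    {T : Module.End K (⨂[K] _ : Fin n, V)} (hT : T ∈ equivariantEnd K V n) :
    T (tprod K b) ∈ Submodule.span K (Set.range fun σ => permFactors K V n σ (tprod K b)) := by
  have hrange : (Set.range fun σ => permFactors K V n σ (tprod K b)) =
      (Basis.piTensorProduct fun _ => b) '' {f | Function.Surjective f} := by
    ext y
    constructor
    · rintro ⟨σ, rfl⟩
      exact ⟨σ.symm, σ.symm.surjective, by simp⟩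
    · rintro ⟨f, hf, rfl⟩
      exact ⟨(Equiv.ofBijective f ⟨Finite.injective_iff_surjective.mpr hf, hf⟩).symm,
        by simp; rfl⟩
  rw [hrange, Module.Basis.mem_span_image]
  exact fun f hf => surjective_of_mem_support_repr_apply_tprod b hT hf

theorem eq_zero_of_mem_equivariantEnd_of_apply_tprod_eq_zero (b : Module.Basis (Fin n) K V)
    {S : Module.End K (⨂[K] _ : Fin n, V)} (hS : S ∈ equivariantEnd K V n)
    (h : S (tprod K b) = 0) : S = 0 := by
  have := Module.Finite.of_basis b
  refine PiTensorProduct.ext ?_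
  rw [LinearMap.zero_compMultilinearMap]
  refine MultilinearMap.eq_zero_of_forall_apply_eq_zero_of_apply_ne_zero
    (D := b.det.toMultilinearMap)
    (fun h0 => b.det_ne_zero (AlternatingMap.coe_multilinearMap_injective h0)) fun v hv => ?_
  obtain ⟨hli, hspan⟩ := b.is_basis_iff_det.mpr (isUnit_iff_ne_zero.mpr hv)
  set g := b.equiv (Module.Basis.mk hli hspan.ge) (Equiv.refl _)
  have hv : tprod K v = diagPower K V n g (tprod K b) := by simp [g]
  rw [LinearMap.compMultilinearMap_apply, hv, ← LinearMap.comp_apply,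
    mem_equivariantEnd_iff.mp hS g, LinearMap.comp_apply, h, map_zero]

theorem span_permFactors_eq_equivariantEnd (b : Module.Basis (Fin n) K V) :
    Submodule.span K (Set.range (permFactors K V n)) =
      Subalgebra.toSubmodule (equivariantEnd K V n) := by
  refine le_antisymm span_permFactors_le_equivariantEnd fun T hT => ?_
  obtain ⟨c, hc⟩ := (Submodule.mem_span_range_iff_exists_fun K).mp
    (apply_tprod_mem_span_permFactors_apply b hT)
  have hA :
      ∑ σ, c σ • permFactors K V n σ ∈ Submodule.span K (Set.range (permFactors K V n)) :=
    Submodule.sum_mem _ fun σ _ => Submodule.smul_mem _ _ (Submodule.subset_span ⟨σ, rfl⟩)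
  have hTA : T - ∑ σ, c σ • permFactors K V n σ = 0 :=
    eq_zero_of_mem_equivariantEnd_of_apply_tprod_eq_zero b
      (sub_mem hT (span_permFactors_le_equivariantEnd hA)) (by
        rw [LinearMap.sub_apply, LinearMap.sum_apply]
        simp only [LinearMap.smul_apply, hc, sub_self])
  rwa [sub_eq_zero.mp hTA]

end TensorPower

/-- Schur–Weyl duality when `dim V = n` over an infinite field: the map from the group
algebra `K[Sₙ]` to endomorphisms of `V^{⊗n}` by place permutations is injective, and its
range is exactly the `GL(V)`-equivariant endomorphisms. -/
theorem stmt6 (K : Type) [Field K] [Infinite K] (n : ℕ) (V : Type) [AddCommGroup V]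
    [Module K V] [FiniteDimensional K V] (hdim : Module.finrank K V = n) :
    Function.Injective
      (fun c : Equiv.Perm (Fin n) →₀ K => c.sum fun σ a => a • permFactors K V n σ) ∧
    Set.range
      (fun c : Equiv.Perm (Fin n) →₀ K => c.sum fun σ a => a • permFactors K V n σ) =
      {T : (⨂[K] _ : Fin n, V) →ₗ[K] (⨂[K] _ : Fin n, V) |
        ∀ g : V ≃ₗ[K] V,
          T ∘ₗ diagPower K V n g.toLinearMap = diagPower K V n g.toLinearMap ∘ₗ T} := by
  obtain b : Module.Basis (Fin n) K V := Module.finBasisOfFinrankEq K V hdim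
  refine ⟨linearIndependent_permFactors b (Function.Embedding.refl _), ?_⟩
  ext T
  rw [Set.mem_ofPred_eq, ← mem_equivariantEnd_iff, ← Subalgebra.mem_toSubmodule,
    ← span_permFactors_eq_equivariantEnd b, ← Finsupp.range_linearCombination]
  rfl
end
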